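/- The Shapley comprehensive importance index k_μ of a fuzzy measure μ is itself a fuzzy measure: k_μ(∅) = 0, k_μ(N) = 1, and A ⊆ B implies k_μ(A) ≤ k_μ(B). -/

import Mathlib

lemma choose_nat_id (m b : ℕ) :
    (m + 1) * m.choose b * ((m + 1).choose b + (m + 1).choose (b + 1)) =
      (m + 2) * (m + 1).choose b * (m + 1).choose (b + 1) := by
  have p : (m + 1).choose b + (m + 1).choose (b + 1) = (m + 2).choose (b + 1) :=
    (Nat.choose_succ_succ' (m + 1) b).symm
  have I : (m + 1) * m.choose b = (m + 1).choose (b + 1) * (b + 1) :=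
    Nat.add_one_mul_choose_eq m b
  have II : (m + 2) * (m + 1).choose b = (m + 2).choose (b + 1) * (b + 1) :=
    Nat.add_one_mul_choose_eq (m + 1) b
  have h : ((m+1) * m.choose b * ((m+1).choose b + (m+1).choose (b+1))) * (b+1)
      = ((m + 2) * (m + 1).choose b * (m + 1).choose (b + 1)) * (b+1) := by
    rw [p]
    calc (m+1) * m.choose b * (m+2).choose (b+1) * (b+1)
        = ((m+1) * m.choose b) * ((m+2).choose (b+1) * (b+1)) := by ring
      _ = ((m+1).choose (b+1) * (b+1)) * ((m+2) * (m+1).choose b) := by rw [I, II]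
      _ = (m + 2) * (m + 1).choose b * (m + 1).choose (b + 1) * (b + 1) := by ring
  exact Nat.eq_of_mul_eq_mul_right (Nat.succ_pos b) h

lemma coeff_id (m b : ℕ) (hb : b ≤ m) :
    (((m:ℝ) + 1) + 1)⁻¹ * (((m + 1).choose b : ℕ) : ℝ)⁻¹
      + (((m:ℝ) + 1) + 1)⁻¹ * (((m + 1).choose (b + 1) : ℕ) : ℝ)⁻¹
      = ((m:ℝ) + 1)⁻¹ * ((m.choose b : ℕ) : ℝ)⁻¹ := by
  have h1 : ((m + 1).choose b : ℝ) ≠ 0 := by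
    exact_mod_cast (Nat.choose_pos (by omega : b ≤ m + 1)).ne'
  have h2 : ((m + 1).choose (b + 1) : ℝ) ≠ 0 := by
    exact_mod_cast (Nat.choose_pos (by omega : b + 1 ≤ m + 1)).ne'
  have h3 : ((m.choose b : ℕ) : ℝ) ≠ 0 := by
    exact_mod_cast (Nat.choose_pos hb).ne'
  have h4 : ((m:ℝ) + 1) ≠ 0 := by positivity
  have h5 : ((m:ℝ) + 1 + 1) ≠ 0 := by positivity
  have keyR : ((m:ℝ) + 1) * (m.choose b : ℝ) * (((m + 1).choose b : ℝ) + ((m + 1).choose (b + 1) : ℝ))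
      = ((m:ℝ) + 2) * ((m + 1).choose b : ℝ) * ((m + 1).choose (b + 1) : ℝ) := by
    exact_mod_cast congrArg (Nat.cast : ℕ → ℝ) (choose_nat_id m b)
  field_simp
  linear_combination keyR

lemma step_ineq (m b : ℕ) (hb : b ≤ m) (x y u v : ℝ)
    (huv : u ≤ v) (hxy : x ≤ y) :
    (((m:ℝ) + 1) + 1)⁻¹ * (((m + 1).choose b : ℕ) : ℝ)⁻¹ * (u - x)
      + (((m:ℝ) + 1) + 1)⁻¹ * (((m + 1).choose (b + 1) : ℕ) : ℝ)⁻¹ * (v - y)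
      ≤ ((m:ℝ) + 1)⁻¹ * ((m.choose b : ℕ) : ℝ)⁻¹ * (v - x) := by
  set α : ℝ := (((m:ℝ) + 1) + 1)⁻¹ * (((m + 1).choose b : ℕ) : ℝ)⁻¹ with hα
  set β : ℝ := (((m:ℝ) + 1) + 1)⁻¹ * (((m + 1).choose (b + 1) : ℕ) : ℝ)⁻¹ with hβ
  have hsum : α + β = ((m:ℝ) + 1)⁻¹ * ((m.choose b : ℕ) : ℝ)⁻¹ := coeff_id m b hb
  have hα0 : 0 ≤ α := by positivity
  have hβ0 : 0 ≤ β := by positivity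
  have h1 : α * (u - x) ≤ α * (v - x) :=
    mul_le_mul_of_nonneg_left (by linarith) hα0
  have h2 : β * (v - y) ≤ β * (v - x) :=
    mul_le_mul_of_nonneg_left (by linarith) hβ0
  calc α * (u - x) + β * (v - y) ≤ α * (v - x) + β * (v - x) := by linarith
    _ = (α + β) * (v - x) := by ring
    _ = ((m:ℝ) + 1)⁻¹ * ((m.choose b : ℕ) : ℝ)⁻¹ * (v - x) := by rw [hsum]

/-- The Shapley comprehensive importance index of a fuzzy measure is itself a
fuzzy measure. -/
theorem shapley_importance_is_fuzzy_measure {n : ℕ} (μ : Finset (Fin n) → ℝ)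
    (hrange : ∀ A, 0 ≤ μ A ∧ μ A ≤ 1)
    (h0 : μ ∅ = 0) (h1 : μ Finset.univ = 1)
    (hmono : ∀ A B : Finset (Fin n), A ⊆ B → μ A ≤ μ B)
    (k : Finset (Fin n) → ℝ)
    (hk : ∀ A : Finset (Fin n), k A = ∑ B ∈ Aᶜ.powerset,
      ((n - A.card : ℕ) + 1 : ℝ)⁻¹ * ((n - A.card).choose B.card : ℝ)⁻¹ *
        (μ (A ∪ B) - μ B)) :
    k ∅ = 0 ∧ k Finset.univ = 1 ∧
      ∀ A B : Finset (Fin n), A ⊆ B → k A ≤ k B := by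
  have hstep : ∀ (A : Finset (Fin n)) (i : Fin n), i ∉ A → k A ≤ k (insert i A) := by
    intro A i hi
    have hcardi : (insert i A).card = A.card + 1 := Finset.card_insert_of_notMem hi
    have hcardn : A.card + 1 ≤ n := by
      have := Finset.card_le_univ (insert i A)
      simpa [hcardi, Finset.card_univ] using this
    set m : ℕ := n - (A.card + 1) with hm
    have hmA : n - A.card = m + 1 := by omega
    have hmB : n - (insert i A).card = m := by rw [hcardi]
    have hiC : i ∉ (insert i A)ᶜ := by simp
    have hins : Aᶜ = insert i ((insert i A)ᶜ) := by
      rw [Finset.compl_insert, Finset.insert_erase (Finset.mem_compl.mpr hi)]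
    rw [hk A, hk (insert i A), hins,
      Finset.sum_powerset_insert hiC, hmA, hmB, ← Finset.sum_add_distrib]
    apply Finset.sum_le_sum
    intro t ht
    rw [Finset.mem_powerset] at ht
    have hit : i ∉ t := fun h => hiC (ht h)
    have hcardt : (insert i t).card = t.card + 1 := Finset.card_insert_of_notMem hit
    have hbt : t.card ≤ m := by
      have := Finset.card_le_card ht
      rwa [Finset.card_compl, Fintype.card_fin, hmB] at this
    have hA : A ∪ insert i t = insert i A ∪ t := by
      rw [Finset.union_insert, Finset.insert_union]
    have hsub1 : A ∪ t ⊆ insert i A ∪ t :=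
      Finset.union_subset_union (Finset.subset_insert i A) le_rfl
    have hsub2 : t ⊆ insert i t := Finset.subset_insert i t
    have h1 := hmono _ _ hsub1
    have h2 := hmono _ _ hsub2
    rw [hcardt, hA]
    push_cast
    exact step_ineq m t.card hbt (μ t) (μ (insert i t)) (μ (A ∪ t))
      (μ (insert i A ∪ t)) h1 h2
  refine ⟨?_, ?_, ?_⟩
  · rw [hk]; simp
  · rw [hk]
    simp [Finset.card_univ, h0, h1]
  · intro A B hAB
    have key : ∀ (s : Finset (Fin n)) (A : Finset (Fin n)), Disjoint A s →
        k A ≤ k (A ∪ s) := by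
      intro s
      induction s using Finset.induction_on with
      | empty => intro A _; simp
      | @insert i s' his IH =>
        intro A hdisj
        have hd2 : Disjoint (insert i A) s' := by
          rw [Finset.disjoint_insert_right] at hdisj
          exact Finset.disjoint_insert_left.mpr ⟨his, hdisj.2⟩
        have hiA : i ∉ A := by
          rw [Finset.disjoint_insert_right] at hdisj
          exact fun h => hdisj.1 h
        calc k A ≤ k (insert i A) := hstep A i hiA
          _ ≤ k (insert i A ∪ s') := IH (insert i A) hd2
          _ = k (A ∪ insert i s') := by rw [Finset.insert_union, Finset.union_insert]
    have := key (B \ A) A Finset.disjoint_sdiff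
    rwa [Finset.union_sdiff_of_subset hAB] at this
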